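/- If G is a König–Egerváry graph, I is a maximum critical independent set of G, and M is a maximum matching of G, then nucleus(G) = M(N(I) \ corona(G)) ∪ ker(G). -/
import Mathlib
set_option linter.unusedSectionVars false


open Finset

variable {V : Type*} [Fintype V] [DecidableEq V] (G : SimpleGraph V) [DecidableRel G.Adj]

/-- `N(S)`: the set of vertices adjacent to some vertex of `S`. -/
def nbhd (S : Finset V) : Finset V := S.biUnion (fun v => G.neighborFinset v)

/-- `S` is an independent set of `G`. -/
def Indep (S : Finset V) : Prop := ∀ u ∈ S, ∀ v ∈ S, ¬ G.Adj u v

/-- The difference `d_G(S) = |S| - |N(S)|`. -/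
def diffI (S : Finset V) : ℤ := (S.card : ℤ) - ((nbhd G S).card : ℤ)

/-- `S` is a maximum independent set of `G`. -/
def IsMaxIndep (S : Finset V) : Prop :=
  Indep G S ∧ ∀ T : Finset V, Indep G T → T.card ≤ S.card

/-- `I` is a critical independent set of `G`. -/
def IsCritIndep (I : Finset V) : Prop :=
  Indep G I ∧ ∀ J : Finset V, Indep G J → diffI G J ≤ diffI G I

/-- `I` is a maximum critical independent set of `G`. -/
def IsMaxCritIndep (I : Finset V) : Prop :=
  IsCritIndep G I ∧ ∀ J : Finset V, IsCritIndep G J → J.card ≤ I.card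

/-- `core(G)`: intersection of all maximum independent sets. -/
def core : Set V := {v | ∀ S : Finset V, IsMaxIndep G S → v ∈ S}

/-- `corona(G)`: union of all maximum independent sets. -/
def corona : Set V := {v | ∃ S : Finset V, IsMaxIndep G S ∧ v ∈ S}

/-- `nucleus(G)`: intersection of all maximum critical independent sets. -/
def nucleus : Set V := {v | ∀ S : Finset V, IsMaxCritIndep G S → v ∈ S}

/-- `diadem(G)`: union of all maximum critical independent sets. -/
def diadem : Set V := {v | ∃ S : Finset V, IsMaxCritIndep G S ∧ v ∈ S}

/-- `ker(G)`: intersection of all critical independent sets. -/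
def kerS : Set V := {v | ∀ S : Finset V, IsCritIndep G S → v ∈ S}

/-- A matching of `G`, given as an involution of the vertex set:
unmatched vertices are fixed points, matched vertices are sent to their partner. -/
def IsMatching (M : V → V) : Prop :=
  Function.Involutive M ∧ ∀ v, M v ≠ v → G.Adj v (M v)

/-- Twice the number of edges of the matching `M`, i.e. the number of matched vertices. -/
def matchSize (M : V → V) : ℕ := (univ.filter fun v => M v ≠ v).card

/-- `M` is a maximum matching of `G`. -/
def IsMaxMatching (M : V → V) : Prop :=
  IsMatching G M ∧ ∀ M' : V → V, IsMatching G M' → matchSize M' ≤ matchSize M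

/-- `M` is a matching of the induced subgraph `G[L]`. -/
def IsMatchingOn (L : Finset V) (M : V → V) : Prop :=
  IsMatching G M ∧ ∀ v, M v ≠ v → v ∈ L

/-- `M` is a maximum matching of the induced subgraph `G[L]`. -/
def IsMaxMatchingOn (L : Finset V) (M : V → V) : Prop :=
  IsMatchingOn G L M ∧ ∀ M' : V → V, IsMatchingOn G L M' → matchSize M' ≤ matchSize M

/-- `S` is a maximum independent set of the induced subgraph `G[L]`. -/
def IsMaxIndepOn (L : Finset V) (S : Finset V) : Prop :=
  S ⊆ L ∧ Indep G S ∧ ∀ T : Finset V, T ⊆ L → Indep G T → T.card ≤ S.card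

/-- `core` of the induced subgraph `G[L]`. -/
def coreOn (L : Finset V) : Set V := {v | ∀ S : Finset V, IsMaxIndepOn G L S → v ∈ S}

/-- `D(G[L])`: vertices of `L` missed by some maximum matching of `G[L]`. -/
def Dset (L : Finset V) : Set V := {v | v ∈ L ∧ ∃ M : V → V, IsMaxMatchingOn G L M ∧ M v = v}

/-- The Larson boundary `∂_L(G)` of the set `L`. -/
def boundaryL (L : Finset V) : Set V := {v | v ∈ L ∧ ∃ w, w ∉ L ∧ G.Adj v w}

/-- The critical difference `d(G)`. -/
noncomputable def critDiff : ℤ := sSup {d : ℤ | ∃ X : Finset V, diffI G X = d}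

/-- The difference of `S` computed in the induced subgraph `G[L]`. -/
def diffOn (L : Finset V) (S : Finset V) : ℤ := (S.card : ℤ) - ((nbhd G S ∩ L).card : ℤ)

/-- The critical difference of the induced subgraph `G[L]`. -/
noncomputable def critDiffOn (L : Finset V) : ℤ := sSup {d : ℤ | ∃ X : Finset V, X ⊆ L ∧ diffOn G L X = d}

/-- `G` is a König–Egerváry graph: `α(G) + μ(G) = |V(G)|`. -/
def KonigEgervary : Prop :=
  ∃ (S : Finset V) (M : V → V), IsMaxIndep G S ∧ IsMaxMatching G M ∧
    2 * S.card + matchSize M = 2 * Fintype.card V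
lemma mem_nbhd' {S : Finset V} {v : V} : v ∈ nbhd G S ↔ ∃ u ∈ S, G.Adj u v := by
  simp [nbhd, SimpleGraph.mem_neighborFinset]

lemma indep_subset {S T : Finset V} (h : Indep G S) (hTS : T ⊆ S) : Indep G T :=
  fun u hu v hv => h u (hTS hu) v (hTS hv)

lemma nbhd_max_indep {S : Finset V} (hS : IsMaxIndep G S) : nbhd G S = univ \ S := by
  ext v
  simp only [mem_sdiff, mem_univ, true_and, mem_nbhd']
  constructor
  · rintro ⟨u, hu, hadj⟩ hv
    exact hS.1 u hu v hv hadj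
  · intro hv
    by_contra hcon
    push_neg at hcon
    have hind : Indep G (insert v S) := by
      intro a ha b hb
      rcases Finset.mem_insert.1 ha with ha' | ha'
      · rcases Finset.mem_insert.1 hb with hb' | hb'
        · rw [ha', hb']; simp
        · rw [ha']; exact fun hadj => hcon b hb' hadj.symm
      · rcases Finset.mem_insert.1 hb with hb' | hb'
        · rw [hb']; exact fun hadj => hcon a ha' hadj
        · exact hS.1 a ha' b hb'
    have := hS.2 _ hind
    rw [Finset.card_insert_of_notMem hv] at this
    omega

lemma matchStruct (hKE : KonigEgervary G) {S : Finset V} (hS : IsMaxIndep G S)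
    {M : V → V} (hM : IsMaxMatching G M) :
    ∀ v, v ∉ S → M v ≠ v ∧ M v ∈ S := by
  obtain ⟨S₀, M₀, hS₀, hM₀, heq⟩ := hKE
  have hα : S₀.card = S.card := le_antisymm (hS.2 _ hS₀.1) (hS₀.2 _ hS.1)
  have hm : matchSize M₀ = matchSize M := le_antisymm (hM.2 _ hM₀.1) (hM₀.2 _ hM.1)
  set F : Finset V := univ.filter (fun v => M v ≠ v) with hF
  have hFm : F.card = matchSize M := rfl
  have hMF : ∀ v, v ∈ F → M v ∈ F := by
    intro v hv
    simp only [hF, mem_filter, mem_univ, true_and] at hv ⊢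
    intro hmm
    exact hv ((hM.1.1 v).symm.trans hmm).symm
  have hinj : Set.InjOn M ↑(F ∩ S) := by
    intro a _ b _ hab
    have := congrArg M hab
    rwa [hM.1.1, hM.1.1] at this
  have himg : (F ∩ S).image M ⊆ F \ S := by
    intro x hx
    rcases mem_image.1 hx with ⟨v, hv, rfl⟩
    rcases mem_inter.1 hv with ⟨hvF, hvS⟩
    refine mem_sdiff.2 ⟨hMF v hvF, fun hMS => ?_⟩
    exact hS.1 v hvS (M v) hMS (hM.1.2 v (mem_filter.1 hvF).2)
  have hcard1 : (F ∩ S).card ≤ (F \ S).card := by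
    rw [← Finset.card_image_of_injOn hinj]
    exact card_le_card himg
  have hsplit : (F ∩ S).card + (F \ S).card = F.card := card_inter_add_card_sdiff F S
  have hsub : F \ S ⊆ univ \ S := sdiff_subset_sdiff (subset_univ F) (le_refl S)
  have hOcard : (univ \ S).card = Fintype.card V - S.card := by
    rw [card_sdiff_of_subset (subset_univ S), Finset.card_univ]
  have hle : (F \ S).card ≤ Fintype.card V - S.card := by rw [← hOcard]; exact card_le_card hsub
  have hScard : S.card ≤ Fintype.card V := by rw [← Finset.card_univ]; exact card_le_univ S
  have hFScard : (F \ S).card = (univ \ S).card := by omega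
  have hFSeq : F \ S = univ \ S := eq_of_subset_of_card_le hsub (le_of_eq hFScard.symm)
  have himgeq : (F ∩ S).image M = F \ S := by
    apply eq_of_subset_of_card_le himg
    rw [Finset.card_image_of_injOn hinj]
    omega
  intro v hv
  have hvFS : v ∈ F \ S := by rw [hFSeq]; exact mem_sdiff.2 ⟨mem_univ v, hv⟩
  have hvF : v ∈ F := (mem_sdiff.1 hvFS).1
  refine ⟨(mem_filter.1 hvF).2, ?_⟩
  rcases mem_image.1 (by rw [himgeq]; exact hvFS : v ∈ (F ∩ S).image M) with ⟨w, hw, hwv⟩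
  have : M v = w := by rw [← hwv, hM.1.1]
  rw [this]
  exact (mem_inter.1 hw).2
lemma injAux1 (hKE : KonigEgervary G) {S : Finset V} (hS : IsMaxIndep G S)
    {M : V → V} (hM : IsMaxMatching G M) {J : Finset V} :
    (J \ S).card ≤ (nbhd G J ∩ S).card := by
  apply Finset.card_le_card_of_injOn M
  · intro a ha
    rcases mem_sdiff.1 ha with ⟨haJ, haS⟩
    obtain ⟨hne, hmem⟩ := matchStruct G hKE hS hM a haS
    exact mem_inter.2 ⟨(mem_nbhd' G).2 ⟨a, haJ, hM.1.2 a hne⟩, hmem⟩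
  · intro a _ b _ hab
    rw [← hM.1.1 a, hab, hM.1.1]

lemma keyCountGen (hKE : KonigEgervary G) {S : Finset V} (hS : IsMaxIndep G S)
    {M : V → V} (hM : IsMaxMatching G M) {J : Finset V} (hJ : Indep G J)
    (k : ℕ) (hk : k = 0 ∨ (k = 1 ∧ ∃ u, u ∈ S ∧ u ∉ J ∧ (M u = u ∨ M u ∈ nbhd G J))) :
    diffI G J ≤ 2 * (S.card : ℤ) - (Fintype.card V : ℤ) - (k : ℤ) := by
  classical
  set T : Finset V := (nbhd G J \ S) ∪ (S \ J) with hT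
  set g : V → V := fun x => if M x ∈ J then x else M x with hg
  -- g maps univ \ S into T
  have hmaps : ∀ x ∈ univ \ S, g x ∈ T := by
    intro x hx
    have hxS : x ∉ S := (mem_sdiff.1 hx).2
    obtain ⟨hne, hMxS⟩ := matchStruct G hKE hS hM x hxS
    by_cases hMxJ : M x ∈ J
    · have : x ∈ nbhd G J := (mem_nbhd' G).2 ⟨M x, hMxJ, (hM.1.2 x hne).symm⟩
      simp only [hg, hT, if_pos hMxJ, mem_union, mem_sdiff]
      exact Or.inl ⟨this, hxS⟩
    · simp only [hg, hT, if_neg hMxJ, mem_union, mem_sdiff]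
      exact Or.inr ⟨hMxS, hMxJ⟩
  have hinj : Set.InjOn g ↑(univ \ S) := by
    intro a ha b hb hab
    simp only [Finset.coe_sdiff, Set.mem_diff, Finset.mem_coe] at ha hb
    have haS : a ∉ S := ha.2
    have hbS : b ∉ S := hb.2
    obtain ⟨hnea, hMaS⟩ := matchStruct G hKE hS hM a haS
    obtain ⟨hneb, hMbS⟩ := matchStruct G hKE hS hM b hbS
    simp only [hg] at hab
    by_cases hMaJ : M a ∈ J <;> by_cases hMbJ : M b ∈ J
    · rwa [if_pos hMaJ, if_pos hMbJ] at hab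
    · rw [if_pos hMaJ, if_neg hMbJ] at hab
      rw [← hab] at hMbS
      exact absurd hMbS haS
    · rw [if_neg hMaJ, if_pos hMbJ] at hab
      rw [hab] at hMaS
      exact absurd hMaS hbS
    · rw [if_neg hMaJ, if_neg hMbJ] at hab
      rw [← hM.1.1 a, hab, hM.1.1]
  have hbase : (univ \ S).card + k ≤ T.card := by
    rcases hk with rfl | ⟨rfl, u, huS, huJ, hcase⟩
    · simpa using Finset.card_le_card_of_injOn g hmaps hinj
    · -- find t ∈ T not in the image of g
      have himg : (univ \ S).image g ⊆ T := by
        intro x hx; rcases mem_image.1 hx with ⟨v, hv, rfl⟩; exact hmaps v hv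
      obtain ⟨t, htT, htimg⟩ : ∃ t, t ∈ T ∧ t ∉ (univ \ S).image g := by
        by_cases hfix : M u = u
        · refine ⟨u, ?_, ?_⟩
          · simp only [hT, mem_union, mem_sdiff]; exact Or.inr ⟨huS, huJ⟩
          · intro hmem
            rcases mem_image.1 hmem with ⟨x, hx, hgx⟩
            have hxS : x ∉ S := (mem_sdiff.1 hx).2
            simp only [hg] at hgx
            by_cases hMxJ : M x ∈ J
            · rw [if_pos hMxJ] at hgx; exact hxS (hgx ▸ huS)
            · rw [if_neg hMxJ] at hgx
              have : x = M u := by rw [← hgx, hM.1.1]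
              rw [hfix] at this
              exact hxS (this ▸ huS)
        · have hMuN : M u ∈ nbhd G J := hcase.resolve_left hfix
          have hMuS : M u ∉ S := fun hmem => hS.1 u huS (M u) hmem (hM.1.2 u hfix)
          refine ⟨M u, ?_, ?_⟩
          · simp only [hT, mem_union, mem_sdiff]; exact Or.inl ⟨hMuN, hMuS⟩
          · intro hmem
            rcases mem_image.1 hmem with ⟨x, hx, hgx⟩
            have hxS : x ∉ S := (mem_sdiff.1 hx).2
            simp only [hg] at hgx
            by_cases hMxJ : M x ∈ J
            · rw [if_pos hMxJ] at hgx
              have : M x = u := by rw [hgx, hM.1.1]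
              exact huJ (this ▸ hMxJ)
            · rw [if_neg hMxJ] at hgx
              have hxu : x = u := by
                have := congrArg M hgx
                rwa [hM.1.1, hM.1.1] at this
              exact hxS (hxu ▸ huS)
      have hss : (univ \ S).image g ⊂ T := ssubset_iff_of_subset himg |>.2 ⟨t, htT, htimg⟩
      have := Finset.card_lt_card hss
      rw [Finset.card_image_of_injOn hinj] at this
      omega
  -- arithmetic
  have h1 : (J \ S).card ≤ (nbhd G J ∩ S).card := injAux1 G hKE hS hM
  have e1 : (nbhd G J ∩ S).card + (nbhd G J \ S).card = (nbhd G J).card :=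
    card_inter_add_card_sdiff _ _
  have e2 : (J ∩ S).card + (J \ S).card = J.card := card_inter_add_card_sdiff _ _
  have e3 : (S ∩ J).card + (S \ J).card = S.card := card_inter_add_card_sdiff _ _
  have e4 : (J ∩ S).card = (S ∩ J).card := by rw [inter_comm]
  have e5 : T.card = (nbhd G J \ S).card + (S \ J).card := by
    rw [hT]
    apply card_union_of_disjoint
    rw [disjoint_left]
    intro a ha hb
    exact (mem_sdiff.1 ha).2 (mem_sdiff.1 hb).1
  have e6 : (univ \ S).card = Fintype.card V - S.card := by
    rw [card_sdiff_of_subset (subset_univ S), Finset.card_univ]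
  have e7 : S.card ≤ Fintype.card V := by
    rw [← Finset.card_univ]; exact card_le_univ S
  simp only [diffI]
  omega
lemma diff_max_indep {S : Finset V} (hS : IsMaxIndep G S) :
    diffI G S = 2 * (S.card : ℤ) - (Fintype.card V : ℤ) := by
  have e7 : S.card ≤ Fintype.card V := by
    rw [← Finset.card_univ]; exact card_le_univ S
  have e6 : (univ \ S).card = Fintype.card V - S.card := by
    rw [card_sdiff_of_subset (subset_univ S), Finset.card_univ]
  simp only [diffI, nbhd_max_indep G hS, e6]
  omega

lemma maxIndep_crit (hKE : KonigEgervary G) {S : Finset V} (hS : IsMaxIndep G S) :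
    IsCritIndep G S := by
  obtain ⟨S₀, M₀, hS₀, hM₀, heq⟩ := hKE
  refine ⟨hS.1, fun J hJ => ?_⟩
  rw [diff_max_indep G hS]
  exact keyCountGen G ⟨S₀, M₀, hS₀, hM₀, heq⟩ hS hM₀ hJ 0 (Or.inl rfl) |>.trans_eq (by push_cast; ring)

lemma maxCrit_iff (hKE : KonigEgervary G) {J : Finset V} :
    IsMaxCritIndep G J ↔ IsMaxIndep G J := by
  obtain ⟨S₀, M₀, hS₀, hM₀, heq⟩ := hKE
  constructor
  · rintro ⟨⟨hJind, hJcrit⟩, hJmax⟩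
    refine ⟨hJind, fun T hT => ?_⟩
    have h1 : S₀.card ≤ J.card := hJmax S₀ (maxIndep_crit G ⟨S₀, M₀, hS₀, hM₀, heq⟩ hS₀)
    exact le_trans (hS₀.2 T hT) h1
  · intro hJ
    exact ⟨maxIndep_crit G ⟨S₀, M₀, hS₀, hM₀, heq⟩ hJ, fun J' hJ' => hJ.2 J' hJ'.1⟩

lemma extension {J T : Finset V} (hJ : IsCritIndep G J) (hT : IsMaxIndep G T) :
    IsMaxIndep G (J ∪ (T \ (J ∪ nbhd G J))) := by
  set W : Finset V := T \ (J ∪ nbhd G J) with hW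
  have hWT : W ⊆ T := sdiff_subset
  have hind : Indep G (J ∪ W) := by
    intro a ha b hb
    rcases mem_union.1 ha with haJ | haW <;> rcases mem_union.1 hb with hbJ | hbW
    · exact hJ.1 a haJ b hbJ
    · intro hadj
      have : b ∈ nbhd G J := (mem_nbhd' G).2 ⟨a, haJ, hadj⟩
      exact ((mem_sdiff.1 hbW).2) (mem_union.2 (Or.inr this))
    · intro hadj
      have : a ∈ nbhd G J := (mem_nbhd' G).2 ⟨b, hbJ, hadj.symm⟩
      exact ((mem_sdiff.1 haW).2) (mem_union.2 (Or.inr this))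
    · exact hT.1 a (hWT haW) b (hWT hbW)
  -- key inequality : (nbhd G J ∩ T).card ≤ (J \ T).card
  have hcrit : diffI G (J ∩ T) ≤ diffI G J := hJ.2 (J ∩ T) (indep_subset G hJ.1 inter_subset_left)
  have hsub : nbhd G (J ∩ T) ⊆ nbhd G J \ T := by
    intro x hx
    rcases (mem_nbhd' G).1 hx with ⟨u, hu, hadj⟩
    rcases mem_inter.1 hu with ⟨huJ, huT⟩
    refine mem_sdiff.2 ⟨(mem_nbhd' G).2 ⟨u, huJ, hadj⟩, fun hxT => ?_⟩
    exact hT.1 u huT x hxT hadj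
  have h3 : (nbhd G (J ∩ T)).card ≤ (nbhd G J \ T).card := card_le_card hsub
  have e1 : (nbhd G J ∩ T).card + (nbhd G J \ T).card = (nbhd G J).card :=
    card_inter_add_card_sdiff _ _
  have e2 : (J ∩ T).card + (J \ T).card = J.card := card_inter_add_card_sdiff _ _
  have hkey : (nbhd G J ∩ T).card ≤ (J \ T).card := by
    simp only [diffI] at hcrit
    omega
  -- cardinality of J ∪ W
  have hdisj : Disjoint J W := by
    rw [disjoint_left]
    intro a haJ haW
    exact (mem_sdiff.1 haW).2 (mem_union.2 (Or.inl haJ))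
  have ecard : (J ∪ W).card = J.card + W.card := card_union_of_disjoint hdisj
  have hcover : T ⊆ W ∪ (T ∩ J) ∪ (T ∩ nbhd G J) := by
    intro t ht
    by_cases h1 : t ∈ J
    · exact mem_union.2 (Or.inl (mem_union.2 (Or.inr (mem_inter.2 ⟨ht, h1⟩))))
    by_cases h2 : t ∈ nbhd G J
    · exact mem_union.2 (Or.inr (mem_inter.2 ⟨ht, h2⟩))
    · exact mem_union.2 (Or.inl (mem_union.2 (Or.inl (mem_sdiff.2 ⟨ht, by
        simp only [mem_union]; tauto⟩))))
  have hTcard : T.card ≤ W.card + (T ∩ J).card + (T ∩ nbhd G J).card := by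
    calc T.card ≤ (W ∪ (T ∩ J) ∪ (T ∩ nbhd G J)).card := card_le_card hcover
    _ ≤ (W ∪ (T ∩ J)).card + (T ∩ nbhd G J).card := card_union_le _ _
    _ ≤ W.card + (T ∩ J).card + (T ∩ nbhd G J).card := by
        have := card_union_le W (T ∩ J); omega
  have e4 : (T ∩ J).card = (J ∩ T).card := by rw [inter_comm]
  have e5 : (T ∩ nbhd G J).card = (nbhd G J ∩ T).card := by rw [inter_comm]
  have hge : T.card ≤ (J ∪ W).card := by omega
  exact ⟨hind, fun T' hT' => le_trans (hT.2 T' hT') hge⟩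
theorem stmt12 (h : KonigEgervary G) (I : Finset V) (hI : IsMaxCritIndep G I)
    (M : V → V) (hM : IsMaxMatching G M) :
    nucleus G = M '' (↑(nbhd G I) \ corona G) ∪ kerS G := by
  classical
  have hiff : ∀ J : Finset V, IsMaxCritIndep G J ↔ IsMaxIndep G J := fun J => maxCrit_iff G h
  have hImax : IsMaxIndep G I := (hiff I).1 hI
  obtain ⟨S₀, M₀, hS₀, hM₀, heq⟩ := h
  have hKE : KonigEgervary G := ⟨S₀, M₀, hS₀, hM₀, heq⟩
  ext u
  constructor
  · intro hu
    have hucore : ∀ S : Finset V, IsMaxIndep G S → u ∈ S := fun S hS => hu S ((hiff S).2 hS)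
    by_cases hMu : M u ∈ corona G
    · right
      intro J hJ
      by_contra huJ
      have hcrit0 : diffI G S₀ ≤ diffI G J := hJ.2 S₀ hS₀.1
      rw [diff_max_indep G hS₀] at hcrit0
      by_cases hfix : M u = u
      · have hbound := keyCountGen G hKE hS₀ hM hJ.1 1
          (Or.inr ⟨rfl, u, hucore S₀ hS₀, huJ, Or.inl hfix⟩)
        push_cast at hbound
        omega
      · obtain ⟨T₀, hT₀, hMuT₀⟩ := hMu
        set R : Finset V := J ∪ (T₀ \ (J ∪ nbhd G J)) with hRdef
        have hR : IsMaxIndep G R := extension G hJ hT₀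
        have huR : u ∈ R := hucore R hR
        have hMuR : M u ∉ R := fun hmem => hR.1 u huR (M u) hmem (hM.1.2 u hfix)
        have hMuJ' : M u ∈ nbhd G J := by
          have h1 : M u ∉ J := fun hmem => hMuR (mem_union.2 (Or.inl hmem))
          have h2 : M u ∉ T₀ \ (J ∪ nbhd G J) := fun hmem => hMuR (mem_union.2 (Or.inr hmem))
          rcases mem_union.1 (by_contra fun hc => h2 (mem_sdiff.2 ⟨hMuT₀, hc⟩)) with h3 | h3
          · exact absurd h3 h1
          · exact h3
        have hbound := keyCountGen G hKE hR hM hJ.1 1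
          (Or.inr ⟨rfl, u, huR, huJ, Or.inr hMuJ'⟩)
        have hcritR : diffI G R ≤ diffI G J := hJ.2 R hR.1
        rw [diff_max_indep G hR] at hcritR
        push_cast at hbound
        omega
    · left
      have hMuI : M u ∉ I := fun hmem => hMu ⟨I, hImax, hmem⟩
      refine ⟨M u, ⟨?_, hMu⟩, hM.1.1 u⟩
      rw [Finset.mem_coe, nbhd_max_indep G hImax]
      exact mem_sdiff.2 ⟨mem_univ _, hMuI⟩
  · intro hu
    rcases hu with ⟨x, ⟨hxN, hxcor⟩, rfl⟩ | hker
    · intro S hSmc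
      have hSmax := (hiff S).1 hSmc
      have hxS : x ∉ S := fun hmem => hxcor ⟨S, hSmax, hmem⟩
      exact (matchStruct G hKE hSmax hM x hxS).2
    · intro S hSmc
      exact hker S hSmc.1
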